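/- Let A be an associative unital ℂ-algebra with the elements and relations described. Then for all s, t, h ∈ ℕ and all p ≥ 1 one has [J_s^⟨1⟩, X_t^{+((p);h)}] = 2·Σ_{w=0}^{p+1} C(p+1,w)·(−Q)^w·X⁺_{s+t+p·h+w} and [J_s^⟨1⟩, X_t^{−((p);h)}] = −2·Σ_{w=0}^{p+1} C(p+1,w)·(−Q)^w·X⁻_{s+t+p·h+w}, where J_m^⟨1⟩ := J_m − Q·J_{m+1}. (The right-hand sides equal ±2·X_{s+t−h}^{±((p+1);h)} when s+t ≥ h.) -/

import Mathlib

/-! By (L2), `J_s − Q·J_{s+1}` brackets `X_m` to `±2·(X_{s+m} − Q·X_{s+m+1})`, i.e. it shifts the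
index by `s` and multiplies the generating coefficients `(1 − Q·z)^p` of `X_t^{±((p);h)}` by
`1 − Q·z`; Pascal's rule then gives the coefficients `C(p+1, w)·(−Q)^w`. -/

open Finset

/-- `X_t^{±((p);h)}`: for `p > 0`, `Σ_{w=0}^{p} C(p,w)·(−Q)^w·X_{t+p·h+w}`; for `p = 0`, `1`. -/
noncomputable def Xbr {A : Type*} [Ring A] [Algebra ℂ A] (Q : ℂ) (X : ℕ → A) (t p h : ℕ) : A :=
  if p = 0 then 1
  else ∑ w ∈ Finset.range (p + 1), ((p.choose w : ℂ) * (-Q) ^ w) • X (t + p * h + w)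

theorem sum_range_choose_mul_pow_smul_add_smul {R M : Type*} [CommRing R] [AddCommGroup M]
    [Module R M] (a : R) (f : ℕ → M) (p : ℕ) :
    ∑ w ∈ range (p + 1), ((p.choose w : R) * a ^ w) • (f w + a • f (w + 1)) =
      ∑ w ∈ range (p + 2), (((p + 1).choose w : R) * a ^ w) • f w := by
  have shifted : ∑ w ∈ range (p + 1), ((p.choose w : R) * a ^ w) • a • f (w + 1) =
      ∑ w ∈ range (p + 1), ((p.choose w : R) * a ^ (w + 1)) • f (w + 1) := by
    simp only [smul_smul, mul_assoc, ← pow_succ]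
  have unshifted : ∑ w ∈ range (p + 1), ((p.choose w : R) * a ^ w) • f w =
      ∑ w ∈ range (p + 1), ((p.choose (w + 1) : R) * a ^ (w + 1)) • f (w + 1) + f 0 := by
    -- pad with the vanishing term `C(p, p+1) = 0`, then split off `w = 0`
    rw [← add_zero (∑ w ∈ range (p + 1), _), ← zero_smul R (f (p + 1)), ← zero_mul (a ^ (p + 1)),
      ← Nat.cast_zero, ← Nat.choose_succ_self p, ← sum_range_succ, sum_range_succ']
    simp
  rw [sum_range_succ' _ (p + 1)]
  simp only [smul_add, sum_add_distrib, shifted, unshifted, Nat.choose_succ_succ', Nat.cast_add,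
    add_mul, add_smul, Nat.choose_zero_right, Nat.cast_one, pow_zero, one_mul, one_smul]
  abel

section Commutator

variable {R A : Type*} [CommRing R] [Ring A] [Algebra R A]

theorem commutator_smul_right (x y : A) (r : R) :
    x * (r • y) - (r • y) * x = r • (x * y - y * x) := by
  rw [mul_smul_comm, smul_mul_assoc, smul_sub]

theorem commutator_sum_right {ι : Type*} (x : A) (s : Finset ι) (f : ι → A) :
    x * ∑ i ∈ s, f i - (∑ i ∈ s, f i) * x = ∑ i ∈ s, (x * f i - f i * x) := by
  rw [mul_sum, sum_mul, sum_sub_distrib]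

variable (J X : ℕ → A) (c a : R)

theorem commutator_sub_smul_succ (hJX : ∀ s m, J s * X m - X m * J s = c • X (s + m)) (s m : ℕ) :
    (J s - a • J (s + 1)) * X m - X m * (J s - a • J (s + 1)) =
      c • (X (s + m) + (-a) • X (s + m + 1)) := by
  have hJX_succ := hJX (s + 1) m
  rw [Nat.add_right_comm] at hJX_succ
  calc (J s - a • J (s + 1)) * X m - X m * (J s - a • J (s + 1))
      = (J s * X m - X m * J s) - a • (J (s + 1) * X m - X m * J (s + 1)) := by
        rw [sub_mul, mul_sub, smul_mul_assoc, mul_smul_comm, smul_sub]; abel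
    _ = c • (X (s + m) + (-a) • X (s + m + 1)) := by
        rw [hJX, hJX_succ, smul_comm]; module

theorem commutator_sub_smul_succ_binomial_sum
    (hJX : ∀ s m, J s * X m - X m * J s = c • X (s + m)) (s t p : ℕ) :
    (J s - a • J (s + 1)) * (∑ w ∈ range (p + 1), ((p.choose w : R) * (-a) ^ w) • X (t + w)) -
        (∑ w ∈ range (p + 1), ((p.choose w : R) * (-a) ^ w) • X (t + w)) * (J s - a • J (s + 1)) =
      c • ∑ w ∈ range (p + 2), (((p + 1).choose w : R) * (-a) ^ w) • X (s + t + w) := by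
  simp only [commutator_sum_right, commutator_smul_right, commutator_sub_smul_succ J X c a hJX,
    ← sum_range_choose_mul_pow_smul_add_smul, smul_sum, smul_comm c, add_assoc]

end Commutator

theorem stmt2 {A : Type*} [Ring A] [Algebra ℂ A] (Q : ℂ) (Xp Xm J : ℕ → A)
    (hL2p : ∀ s t, J s * Xp t - Xp t * J s = (2 : ℂ) • Xp (s + t))
    (hL2m : ∀ s t, J s * Xm t - Xm t * J s = -((2 : ℂ) • Xm (s + t)))
    (s t h p : ℕ) (hp : 1 ≤ p) :
    ((J s - Q • J (s + 1)) * Xbr Q Xp t p h - Xbr Q Xp t p h * (J s - Q • J (s + 1)) =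
      (2 : ℂ) • ∑ w ∈ Finset.range (p + 2),
        (((p + 1).choose w : ℂ) * (-Q) ^ w) • Xp (s + t + p * h + w)) ∧
    ((J s - Q • J (s + 1)) * Xbr Q Xm t p h - Xbr Q Xm t p h * (J s - Q • J (s + 1)) =
      -((2 : ℂ) • ∑ w ∈ Finset.range (p + 2),
        (((p + 1).choose w : ℂ) * (-Q) ^ w) • Xm (s + t + p * h + w))) := by
  have hL2m' : ∀ s t, J s * Xm t - Xm t * J s = (-2 : ℂ) • Xm (s + t) := by
    simpa only [neg_smul] using hL2m
  simp only [Xbr, if_neg (Nat.one_le_iff_ne_zero.mp hp)]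
  constructor
  · simpa only [add_assoc] using
      commutator_sub_smul_succ_binomial_sum J Xp 2 Q hL2p s (t + p * h) p
  · simpa only [add_assoc, neg_smul] using
      commutator_sub_smul_succ_binomial_sum J Xm (-2) Q hL2m' s (t + p * h) p
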